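/- arXiv:math/0404269 — 6 statements merged into one kernel-verified Lean document; each statement's English description precedes it below -/
import Mathlib

section
/- Let T = S^1 × S^1 act on C ⊕ C ⊕ C by (e^{iα}, e^{iβ})·(z₁, z₂, z₃) = (e^{iα}z₁, e^{iβ}z₂, e^{i(α+β)}z₃), and let M be the orbit of the point p = (1,1,1). Then the set of group elements g ∈ T such that g·p is a critical point of the height function h(x) = Re⟨x, p⟩ on M (equivalently, such that g⁻¹·p lies in the normal space of M at p) consists of exactly 6 elements, namely g = (±1, ±1) and g = (−1/2 ± i√3/2, −1/2 ± i√3/2). -/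
open Complex

lemma aux_normSq (x : ℂ) (hx : ‖x‖ = 1) : x.re * x.re + x.im * x.im = 1 := by
  have : Complex.normSq x = 1 := by
    rw [← Complex.sq_norm, hx]; norm_num
  simpa [Complex.normSq_apply] using this

lemma aux (x y : ℂ) :
    (‖x‖ = 1 ∧ ‖y‖ = 1 ∧
      ∃ r₁ r₂ r₃ r₄ : ℝ,
        ((x⁻¹ : ℂ), (y⁻¹ : ℂ), ((x * y)⁻¹ : ℂ)) =
          (((r₁ : ℂ) + r₄ * I), ((r₂ : ℂ) + r₄ * I), ((r₃ : ℂ) - r₄ * I))) ↔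
    (x.re * x.re + x.im * x.im = 1 ∧ y.re * y.re + y.im * y.im = 1 ∧
      y.im = x.im ∧ x.re * y.im + x.im * y.re = -x.im) := by
  constructor
  · rintro ⟨hx, hy, r₁, r₂, r₃, r₄, h⟩
    have hx1 := aux_normSq x hx
    have hy1 := aux_normSq y hy
    have hnx : Complex.normSq x = 1 := by simpa [Complex.normSq_apply] using hx1
    have hny : Complex.normSq y = 1 := by simpa [Complex.normSq_apply] using hy1
    have hnxy : Complex.normSq (x * y) = 1 := by rw [Complex.normSq_mul, hnx, hny]; ring
    simp only [Prod.ext_iff, Complex.ext_iff, Complex.add_re, Complex.add_im, Complex.sub_re,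
      Complex.sub_im, Complex.ofReal_re, Complex.ofReal_im, Complex.mul_re, Complex.mul_im,
      Complex.I_re, Complex.I_im, Complex.inv_im, hnx, hny, hnxy,
      mul_zero, mul_one, zero_mul, zero_sub, sub_zero, zero_add, add_zero, div_one] at h
    obtain ⟨⟨-, h1⟩, ⟨-, h2⟩, -, h3⟩ := h
    refine ⟨hx1, hy1, by linarith, ?_⟩
    have : (x * y).im = x.re * y.im + x.im * y.re := Complex.mul_im x y
    linarith
  · rintro ⟨hx1, hy1, h1, h2⟩
    have hnx : Complex.normSq x = 1 := by simpa [Complex.normSq_apply] using hx1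
    have hny : Complex.normSq y = 1 := by simpa [Complex.normSq_apply] using hy1
    have hnxy : Complex.normSq (x * y) = 1 := by rw [Complex.normSq_mul, hnx, hny]; ring
    refine ⟨?_, ?_, x⁻¹.re, y⁻¹.re, (x * y)⁻¹.re, x⁻¹.im, ?_⟩
    · rw [Complex.norm_def, hnx, Real.sqrt_one]
    · rw [Complex.norm_def, hny, Real.sqrt_one]
    · simp only [Prod.ext_iff, Complex.ext_iff, Complex.add_re, Complex.add_im, Complex.sub_re,
        Complex.sub_im, Complex.ofReal_re, Complex.ofReal_im, Complex.mul_re, Complex.mul_im,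
        Complex.I_re, Complex.I_im, Complex.inv_im, hnx, hny, hnxy,
        mul_zero, mul_one, zero_mul, zero_sub, sub_zero, zero_add, add_zero, div_one]
      exact ⟨⟨trivial, trivial⟩, ⟨trivial, by rw [h1]⟩, trivial, by linarith⟩

/- STATEMENT 0: For the torus T = S¹ × S¹ acting on ℂ³ by
   (e^{iα}, e^{iβ})·(z₁,z₂,z₃) = (e^{iα}z₁, e^{iβ}z₂, e^{i(α+β)}z₃), the set of g ∈ T such
   that g·p is a critical point of the height function in direction p = (1,1,1)
   (equivalently g⁻¹·p lies in the normal space ν_pM, which is the real span of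
   (1,0,0),(0,1,0),(0,0,1),(i,i,−i)) consists of exactly the 6 elements
   (±1,±1) and (−1/2 ± i√3/2, −1/2 ± i√3/2). -/
open Complex in
theorem stmt0 :
    {g : ℂ × ℂ | ‖g.1‖ = 1 ∧ ‖g.2‖ = 1 ∧
      ∃ r₁ r₂ r₃ r₄ : ℝ,
        ((g.1⁻¹ : ℂ), (g.2⁻¹ : ℂ), ((g.1 * g.2)⁻¹ : ℂ)) =
          (((r₁ : ℂ) + r₄ * I), ((r₂ : ℂ) + r₄ * I), ((r₃ : ℂ) - r₄ * I))} =
    {((1 : ℂ), (1 : ℂ)), (1, -1), (-1, 1), (-1, -1),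
      ((-1/2 : ℂ) + (Real.sqrt 3 / 2 : ℝ) * I, (-1/2 : ℂ) + (Real.sqrt 3 / 2 : ℝ) * I),
      ((-1/2 : ℂ) - (Real.sqrt 3 / 2 : ℝ) * I, (-1/2 : ℂ) - (Real.sqrt 3 / 2 : ℝ) * I)} := by
  have h3 : Real.sqrt 3 * Real.sqrt 3 = 3 := Real.mul_self_sqrt (by norm_num)
  ext ⟨x, y⟩
  simp only [Set.mem_setOf_eq]
  rw [aux]
  simp only [Set.mem_insert_iff, Set.mem_singleton_iff, Prod.mk.injEq]
  constructor
  · rintro ⟨hx, hy, h1, h2⟩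
    rw [h1] at h2
    have key : x.im * (x.re + y.re + 1) = 0 := by linear_combination h2
    have mk1 : ∀ z : ℂ, z.re = 1 → z.im = 0 → z = 1 := fun z h h' => Complex.ext (by simp [h]) (by simp [h'])
    have mkm1 : ∀ z : ℂ, z.re = -1 → z.im = 0 → z = -1 := fun z h h' => Complex.ext (by simp [h]) (by simp [h'])
    have mkp : ∀ z : ℂ, z.re = -1/2 → z.im = Real.sqrt 3 / 2 →
        z = (-1/2 : ℂ) + (Real.sqrt 3 / 2 : ℝ) * I :=
      fun z h h' => Complex.ext (by simp [h]) (by simp [h'])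
    have mkn : ∀ z : ℂ, z.re = -1/2 → z.im = -(Real.sqrt 3 / 2) →
        z = (-1/2 : ℂ) - (Real.sqrt 3 / 2 : ℝ) * I :=
      fun z h h' => Complex.ext (by simp [h]) (by simp [h'])
    rcases mul_eq_zero.mp key with hs | hab
    · have hyim : y.im = 0 := h1.trans hs
      have hx2 : (x.re - 1) * (x.re + 1) = 0 := by nlinarith
      have hy2 : (y.re - 1) * (y.re + 1) = 0 := by nlinarith
      rcases mul_eq_zero.mp hx2 with h | h <;> rcases mul_eq_zero.mp hy2 with h' | h'
      · exact Or.inl ⟨mk1 x (by linarith) hs, mk1 y (by linarith) hyim⟩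
      · exact Or.inr (Or.inl ⟨mk1 x (by linarith) hs, mkm1 y (by linarith) hyim⟩)
      · exact Or.inr (Or.inr (Or.inl ⟨mkm1 x (by linarith) hs, mk1 y (by linarith) hyim⟩))
      · exact Or.inr (Or.inr (Or.inr (Or.inl ⟨mkm1 x (by linarith) hs, mkm1 y (by linarith) hyim⟩)))
    · have h5 : (x.re - y.re) * (x.re + y.re) = 0 := by linear_combination hx - hy + (y.im + x.im) * h1
      rcases mul_eq_zero.mp h5 with h6 | h6
      · have hxr : x.re = -1/2 := by linarith
        have hyr : y.re = -1/2 := by linarith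
        have h7 : (x.im - Real.sqrt 3 / 2) * (x.im + Real.sqrt 3 / 2) = 0 := by nlinarith
        rcases mul_eq_zero.mp h7 with h8 | h8
        · exact Or.inr (Or.inr (Or.inr (Or.inr (Or.inl
            ⟨mkp x hxr (by linarith), mkp y hyr (by rw [h1]; linarith)⟩))))
        · exact Or.inr (Or.inr (Or.inr (Or.inr (Or.inr
            ⟨mkn x hxr (by linarith), mkn y hyr (by rw [h1]; linarith)⟩))))
      · exfalso; linarith
  · rintro (⟨rfl, rfl⟩ | ⟨rfl, rfl⟩ | ⟨rfl, rfl⟩ | ⟨rfl, rfl⟩ | ⟨rfl, rfl⟩ | ⟨rfl, rfl⟩) <;>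
      refine ⟨?_, ?_, ?_, ?_⟩ <;> simp <;> nlinarith [h3]
end

section
/- The system of real equations (A+B)(D+Ei)=0 (as a complex equation, i.e. (A+B)D = 0 and (A+B)E = 0), (F−Gi)(AB+BC+AC−F²−G²−D²−E²)=0 (i.e. F·S = 0 and G·S = 0 where S = AB+BC+AC−F²−G²−D²−E²), A²+D²+E²+F²+G²=1, A²−B²=0, C²+F²+G²=1 has solution set equal to the union of: (i) {A=B=−C=±1, D=E=F=G=0}; (ii) {A=B=C=±1, D=E=F=G=0}; (iii) {A=B=C=±1/2, D=E=0, F²+G²=3/4}; (iv) {A=−B, C=±1, F=G=0, A²+D²+E²=1}. -/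
/-!
Since `A² = B²`, either `A + B = 0` or `A = B ≠ 0`. If `A = -B`, the quadratic form
`S = AB + BC + AC - F² - G² - D² - E²` equals `-(A² + D² + E² + F² + G²) = -1`, so `F = G = 0`
and `C² = 1`. If `A = B ≠ 0`, then `D = E = 0`, and the two normalisations give `C² = A²`.
Either `F = G = 0`, forcing `A² = 1`, or `S = 0`, which reads `2A² + 2AC = 1`: this rules out
`C = -A` and leaves `C = A`, `A² = 1/4`, `F² + G² = 3/4`.
-/

theorem and_eq_zero_or_eq_zero_of_mul_eq_zero {M₀ : Type*} [MulZeroClass M₀] [NoZeroDivisors M₀]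
    {a b c : M₀} (ha : a * c = 0) (hb : b * c = 0) : (a = 0 ∧ b = 0) ∨ c = 0 := by
  rcases eq_or_ne c 0 with hc | hc
  · exact Or.inr hc
  · exact Or.inl ⟨(mul_eq_zero.mp ha).resolve_right hc, (mul_eq_zero.mp hb).resolve_right hc⟩

section

variable {A B C D E F G : ℝ}

theorem solution_of_eq_neg (hAB : A = -B)
    (hF : F * (A*B + B*C + A*C - F^2 - G^2 - D^2 - E^2) = 0)
    (hG : G * (A*B + B*C + A*C - F^2 - G^2 - D^2 - E^2) = 0)
    (h₁ : A^2 + D^2 + E^2 + F^2 + G^2 = 1) (h₂ : C^2 + F^2 + G^2 = 1) :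
    (C = 1 ∨ C = -1) ∧ F = 0 ∧ G = 0 ∧ A^2 + D^2 + E^2 = 1 := by
  have hS : A*B + B*C + A*C - F^2 - G^2 - D^2 - E^2 = -1 := by
    subst hAB; linear_combination -h₁
  rw [hS] at hF hG
  have hF0 : F = 0 := by linarith
  have hG0 : G = 0 := by linarith
  subst hF0 hG0
  exact ⟨sq_eq_one_iff.mp (by linarith), rfl, rfl, by linarith⟩

theorem solution_of_add_ne_zero (hAB : A + B ≠ 0) (hD : (A + B) * D = 0) (hE : (A + B) * E = 0)
    (hF : F * (A*B + B*C + A*C - F^2 - G^2 - D^2 - E^2) = 0)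
    (hG : G * (A*B + B*C + A*C - F^2 - G^2 - D^2 - E^2) = 0)
    (h₁ : A^2 + D^2 + E^2 + F^2 + G^2 = 1) (hsq : A^2 = B^2) (h₂ : C^2 + F^2 + G^2 = 1) :
    A = B ∧ D = 0 ∧ E = 0 ∧
      ((F = 0 ∧ G = 0 ∧ (A = 1 ∨ A = -1) ∧ (C = A ∨ C = -A)) ∨
        (C = A ∧ (A = 1/2 ∨ A = -1/2) ∧ F^2 + G^2 = 3/4)) := by
  have hBA : B = A := (sq_eq_sq_iff_eq_or_eq_neg.mp hsq.symm).resolve_right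
    fun h ↦ hAB (by rw [h]; ring)
  have hD0 : D = 0 := (mul_eq_zero.mp hD).resolve_left hAB
  have hE0 : E = 0 := (mul_eq_zero.mp hE).resolve_left hAB
  subst B D E
  have hCA : C = A ∨ C = -A := sq_eq_sq_iff_eq_or_eq_neg.mp (by linarith)
  refine ⟨rfl, rfl, rfl, ?_⟩
  rcases and_eq_zero_or_eq_zero_of_mul_eq_zero hF hG with ⟨rfl, rfl⟩ | hS
  · exact Or.inl ⟨rfl, rfl, sq_eq_one_iff.mp (by linarith), hCA⟩
  · have hS' : 2 * A^2 + 2 * A * C = 1 := by linear_combination hS + h₁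
    rcases hCA with hC | hC <;> subst C
    · have hA : A = 1/2 ∨ A = -(1/2) :=
        sq_eq_sq_iff_eq_or_eq_neg.mp (by linear_combination hS' / 4)
      exact Or.inr ⟨rfl, by rwa [neg_div], by linarith⟩
    · exact absurd hS' (by ring_nf; norm_num)

end

theorem stmt2 (A B C D E F G : ℝ) :
    ((A + B) * D = 0 ∧ (A + B) * E = 0 ∧
      F * (A*B + B*C + A*C - F^2 - G^2 - D^2 - E^2) = 0 ∧
      G * (A*B + B*C + A*C - F^2 - G^2 - D^2 - E^2) = 0 ∧
      A^2 + D^2 + E^2 + F^2 + G^2 = 1 ∧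
      A^2 = B^2 ∧
      C^2 + F^2 + G^2 = 1) ↔
    ((A = B ∧ B = -C ∧ (A = 1 ∨ A = -1) ∧ D = 0 ∧ E = 0 ∧ F = 0 ∧ G = 0) ∨
     (A = B ∧ B = C ∧ (A = 1 ∨ A = -1) ∧ D = 0 ∧ E = 0 ∧ F = 0 ∧ G = 0) ∨
     (A = B ∧ B = C ∧ (A = 1/2 ∨ A = -1/2) ∧ D = 0 ∧ E = 0 ∧ F^2 + G^2 = 3/4) ∨
     (A = -B ∧ (C = 1 ∨ C = -1) ∧ F = 0 ∧ G = 0 ∧ A^2 + D^2 + E^2 = 1)) := by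
  constructor
  · rintro ⟨hD, hE, hF, hG, h₁, hsq, h₂⟩
    rcases eq_or_ne (A + B) 0 with hAB | hAB
    · have hAB' : A = -B := eq_neg_of_add_eq_zero_left hAB
      exact Or.inr (Or.inr (Or.inr ⟨hAB', solution_of_eq_neg hAB' hF hG h₁ h₂⟩))
    · obtain ⟨rfl, rfl, rfl, ⟨rfl, rfl, hA, rfl | rfl⟩ | ⟨rfl, hA, hFG⟩⟩ :=
        solution_of_add_ne_zero hAB hD hE hF hG h₁ hsq h₂
      · exact Or.inr (Or.inl ⟨rfl, rfl, hA, rfl, rfl, rfl, rfl⟩)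
      · exact Or.inl ⟨rfl, (neg_neg _).symm, hA, rfl, rfl, rfl, rfl⟩
      · exact Or.inr (Or.inr (Or.inl ⟨rfl, rfl, hA, rfl, rfl, hFG⟩))
  · rintro (⟨rfl, rfl, hA, rfl, rfl, rfl, rfl⟩ | ⟨rfl, rfl, hA, rfl, rfl, rfl, rfl⟩ |
        ⟨rfl, rfl, hA, rfl, rfl, hFG⟩ | ⟨rfl, hC, rfl, rfl, h⟩)
    · rcases hA with h | h <;> rw [neg_eq_iff_eq_neg.mp h] <;> norm_num
    · rcases hA with rfl | rfl <;> norm_num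
    · have hA2 : A^2 = 1/4 := by rcases hA with rfl | rfl <;> norm_num
      have hS : A*A + A*A + A*A - F^2 - G^2 - 0^2 - 0^2 = 0 := by
        linear_combination 3 * hA2 - hFG
      exact ⟨mul_zero _, mul_zero _, by rw [hS, mul_zero], by rw [hS, mul_zero],
        by linear_combination hA2 + hFG, rfl, by linear_combination hA2 + hFG⟩
    · rcases hC with rfl | rfl <;>
        exact ⟨by ring, by ring, by ring, by ring, by linarith, by ring, by norm_num⟩
end

section
/- Let SU(3) act diagonally on C³ ⊕ C³ ⊕ C³ and let M be the orbit through p = (e₁, e₂, e₃) (the standard basis vectors), so M is the standard embedding of SU(3) into the space of 3×3 complex matrices M(3,C) ≅ C⁹ (each g ∈ SU(3) corresponds to the matrix with columns g·e₁, g·e₂, g·e₃). Then for g ∈ SU(3), the point g·p is a critical point of the real height function h(x) = Re tr(x* p) on M if and only if g = ωI for ω a cube root of unity, or g is conjugate in SU(3) to the diagonal matrix diag(−1, −1, 1). -/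
open Matrix Complex

lemma unit_same_im {z w : ℂ} (hz : (starRingEnd ℂ) z * z = 1) (hw : (starRingEnd ℂ) w * w = 1)
    (h : z - (starRingEnd ℂ) z = w - (starRingEnd ℂ) w) : w = z ∨ w = -(starRingEnd ℂ) z := by
  have hz' : z.re ^ 2 + z.im ^ 2 = 1 := by
    have := congrArg Complex.re hz
    simp [Complex.mul_re] at this
    nlinarith [this]
  have hw' : w.re ^ 2 + w.im ^ 2 = 1 := by
    have := congrArg Complex.re hw
    simp [Complex.mul_re] at this
    nlinarith [this]
  have him : z.im = w.im := by
    have := congrArg Complex.im h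
    simp at this
    linarith
  have hre : w.re = z.re ∨ w.re = -z.re := by
    rw [him] at hz'
    have h2 : w.re ^ 2 = z.re ^ 2 := by linarith
    have := sq_eq_sq_iff_eq_or_eq_neg.mp h2
    tauto
  rcases hre with h1 | h1
  · left; apply Complex.ext <;> simp [h1, him]
  · right; apply Complex.ext <;> simp [h1, him]

lemma su_fix (D w : Matrix (Fin 3) (Fin 3) ℂ) (hw : w ∈ unitaryGroup (Fin 3) ℂ) :
    ∃ u ∈ specialUnitaryGroup (Fin 3) ℂ, u * D * star u = w * D * star w := by
  obtain ⟨ζ, hζ⟩ := Complex.isAlgClosed.exists_pow_nat_eq (w.det)⁻¹ (n := 3) (by norm_num)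
  have hdet : (starRingEnd ℂ) w.det * w.det = 1 := by
    have := Unitary.star_mul_self_of_mem (Matrix.det_of_mem_unitary hw)
    exact_mod_cast this
  have hdet0 : w.det ≠ 0 := by
    intro h; rw [h] at hdet; simp at hdet
  have hnsζ : Complex.normSq ζ = 1 := by
    have h3 : (Complex.normSq ζ : ℝ) ^ 3 = 1 := by
      have : Complex.normSq (ζ ^ 3) = Complex.normSq (w.det)⁻¹ := by rw [hζ]
      rw [map_pow, Complex.normSq_inv] at this
      have hns : Complex.normSq w.det = 1 := by
        have := congrArg Complex.re hdet
        simpa [Complex.normSq_eq_conj_mul_self] using (by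
          have : ((Complex.normSq w.det : ℂ)) = 1 := by
            rw [← Complex.normSq_eq_conj_mul_self] at hdet; exact_mod_cast hdet
          exact_mod_cast this)
      rw [hns] at this; simpa using this
    nlinarith [Complex.normSq_nonneg ζ, sq_nonneg (Complex.normSq ζ - 1), sq_nonneg (Complex.normSq ζ + 1)]
  have hζζ : (starRingEnd ℂ) ζ * ζ = 1 := by
    rw [← Complex.normSq_eq_conj_mul_self, hnsζ]; norm_num
  refine ⟨ζ • w, ?_, ?_⟩
  · rw [mem_specialUnitaryGroup_iff]
    constructor
    · rw [Matrix.mem_unitaryGroup_iff']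
      rw [star_smul, Matrix.smul_mul, Matrix.mul_smul, smul_smul]
      rw [Matrix.mem_unitaryGroup_iff'.mp hw]
      rw [show (star ζ) = (starRingEnd ℂ) ζ from rfl, hζζ, one_smul]
    · rw [det_smul]
      simp only [Fintype.card_fin]
      rw [hζ]
      field_simp
  · rw [star_smul, Matrix.smul_mul, Matrix.mul_smul, Matrix.smul_mul, smul_smul]
    rw [show (star ζ) = (starRingEnd ℂ) ζ from rfl, hζζ, one_smul]

lemma perm_conj1 :
    (!![1,0,0;0,0,1;0,1,0] : Matrix (Fin 3) (Fin 3) ℂ) ∈ unitaryGroup (Fin 3) ℂ ∧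
    !![1,0,0;0,0,1;0,1,0] * diagonal ![-1,-1,1] * star (!![1,0,0;0,0,1;0,1,0] : Matrix (Fin 3) (Fin 3) ℂ)
      = diagonal ![-1,1,-1] := by
  constructor
  · rw [Matrix.mem_unitaryGroup_iff']
    ext i j
    fin_cases i <;> fin_cases j <;>
      simp [Matrix.mul_apply, Fin.sum_univ_three, Matrix.conjTranspose_apply, Matrix.one_apply, Matrix.vecHead, Matrix.vecTail]
  · ext i j
    fin_cases i <;> fin_cases j <;>
      simp [Matrix.mul_apply, Fin.sum_univ_three, Matrix.conjTranspose_apply, Matrix.diagonal, Matrix.vecHead, Matrix.vecTail]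

lemma perm_conj2 :
    (!![0,0,1;0,1,0;1,0,0] : Matrix (Fin 3) (Fin 3) ℂ) ∈ unitaryGroup (Fin 3) ℂ ∧
    !![0,0,1;0,1,0;1,0,0] * diagonal ![-1,-1,1] * star (!![0,0,1;0,1,0;1,0,0] : Matrix (Fin 3) (Fin 3) ℂ)
      = diagonal ![1,-1,-1] := by
  constructor
  · rw [Matrix.mem_unitaryGroup_iff']
    ext i j
    fin_cases i <;> fin_cases j <;>
      simp [Matrix.mul_apply, Fin.sum_univ_three, Matrix.conjTranspose_apply, Matrix.one_apply, Matrix.vecHead, Matrix.vecTail]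
  · ext i j
    fin_cases i <;> fin_cases j <;>
      simp [Matrix.mul_apply, Fin.sum_univ_three, Matrix.conjTranspose_apply, Matrix.diagonal, Matrix.vecHead, Matrix.vecTail]

lemma vec_ext (e : Fin 3 → ℂ) (a b c : ℂ) (h0 : e 0 = a) (h1 : e 1 = b) (h2 : e 2 = c) :
    e = ![a, b, c] := by
  funext j
  fin_cases j <;> simp_all

lemma diag_const (a : ℂ) : Matrix.diagonal (fun _ : Fin 3 => a) = a • 1 := by
  ext i j
  by_cases h : i = j <;> simp [h, Matrix.one_apply, Matrix.diagonal]

/- STATEMENT 3: For SU(3) standardly embedded in M(3,ℂ) (identified with the orbit of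
   p = (e₁,e₂,e₃) under the diagonal action on ℂ³⊕ℂ³⊕ℂ³), the point g·p is a critical
   point of the height function h(x) = Re tr(x* p) iff g⁻¹ lies in the normal space
   ν_I = ℂ·I + i·su(3) = {λ·I + Y : λ ∈ ℂ, Y Hermitian traceless}, and this holds iff
   g = ωI for a cube root of unity ω, or g is conjugate in SU(3) to diag(−1,−1,1).
   (For g ∈ SU(3), g⁻¹ is the conjugate transpose star g.) -/
theorem stmt3 (g : Matrix (Fin 3) (Fin 3) ℂ)
    (hg : g ∈ Matrix.specialUnitaryGroup (Fin 3) ℂ) :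
    (∃ (lam : ℂ) (Y : Matrix (Fin 3) (Fin 3) ℂ), Yᴴ = Y ∧ Y.trace = 0 ∧
        star g = lam • (1 : Matrix (Fin 3) (Fin 3) ℂ) + Y) ↔
    ((∃ ω : ℂ, ω ^ 3 = 1 ∧ g = ω • (1 : Matrix (Fin 3) (Fin 3) ℂ)) ∨
     (∃ u ∈ Matrix.specialUnitaryGroup (Fin 3) ℂ,
        g = u * Matrix.diagonal ![-1, -1, 1] * star u)) := by
  obtain ⟨hgu, hgdet⟩ := mem_specialUnitaryGroup_iff.mp hg
  constructor
  · rintro ⟨lam, Y, hY, hYtr, hsg⟩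
    -- c is purely imaginary shift: g - gᴴ = c • 1
    set c : ℂ := (starRingEnd ℂ) lam - lam with hcdef
    have hgc : g - gᴴ = c • 1 := by
      have h1 : gᴴ = lam • 1 + Y := hsg
      have h2 : g = (starRingEnd ℂ) lam • 1 + Y := by
        calc g = gᴴᴴ := (conjTranspose_conjTranspose g).symm
        _ = (lam • (1:Matrix (Fin 3) (Fin 3) ℂ) + Y)ᴴ := by rw [h1]
        _ = (starRingEnd ℂ) lam • 1 + Y := by
            rw [conjTranspose_add, conjTranspose_smul, conjTranspose_one, hY, Complex.star_def]
      rw [h1, h2, hcdef, sub_smul]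
      abel
    -- Spectral theorem for the Hermitian part
    have hA : (g + gᴴ).IsHermitian := by
      unfold Matrix.IsHermitian
      rw [conjTranspose_add, conjTranspose_conjTranspose, add_comm]
    set u := hA.eigenvectorUnitary with hu
    set d := hA.eigenvalues with hd
    have hspec := hA.spectral_theorem
    rw [← hu, ← hd] at hspec
    set e : Fin 3 → ℂ := fun j => ((d j : ℂ) + c) / 2 with he
    have hdiag : diagonal e =
        (2:ℂ)⁻¹ • (diagonal (RCLike.ofReal ∘ d) + c • (1 : Matrix (Fin 3) (Fin 3) ℂ)) := by
      ext i j
      rcases eq_or_ne i j with h | h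
      · subst h
        simp [diagonal_apply_eq, Matrix.one_apply_eq, he]
        ring
      · simp [diagonal_apply_ne _ h, Matrix.one_apply_ne h]
    have huu : (u : Matrix (Fin 3) (Fin 3) ℂ) * star (u : Matrix (Fin 3) (Fin 3) ℂ) = 1 :=
      Matrix.mem_unitaryGroup_iff.mp u.2
    have huu' : star (u : Matrix (Fin 3) (Fin 3) ℂ) * (u : Matrix (Fin 3) (Fin 3) ℂ) = 1 :=
      Matrix.mem_unitaryGroup_iff'.mp u.2
    have hgE : g = (u : Matrix (Fin 3) (Fin 3) ℂ) * diagonal e * star (u : Matrix (Fin 3) (Fin 3) ℂ) := by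
      rw [hdiag]
      rw [Unitary.conjStarAlgAut_apply] at hspec
      rw [Matrix.mul_smul, Matrix.smul_mul, Matrix.mul_add, Matrix.add_mul, ← hspec]
      rw [Matrix.mul_smul, Matrix.smul_mul, Matrix.mul_one, huu]
      have h2g : g + gᴴ + c • 1 = (2:ℂ) • g := by
        rw [← hgc, two_smul]; abel
      rw [h2g, smul_smul]
      norm_num
    -- diagonal e is unitary with det 1
    have hE' : star (u : Matrix (Fin 3) (Fin 3) ℂ) * g * (u : Matrix (Fin 3) (Fin 3) ℂ)
        = diagonal e := by
      rw [hgE]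
      simp only [← Matrix.mul_assoc]
      rw [huu', one_mul, Matrix.mul_assoc, huu', Matrix.mul_one]
    have hEmem : diagonal e ∈ unitaryGroup (Fin 3) ℂ := by
      rw [← hE']
      exact mul_mem (mul_mem (Unitary.star_mem u.2) hgu) u.2
    have hunit : ∀ j, (starRingEnd ℂ) (e j) * e j = 1 := by
      intro j
      have h1 : star (diagonal e) * diagonal e = 1 := Matrix.mem_unitaryGroup_iff'.mp hEmem
      rw [show star (diagonal e) = (diagonal e)ᴴ from rfl, diagonal_conjTranspose,
        diagonal_mul_diagonal] at h1
      have h2 := congrFun (congrFun h1 j) j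
      simpa [Matrix.diagonal, Matrix.one_apply] using h2
    have hdetE : e 0 * e 1 * e 2 = 1 := by
      have h1 : (diagonal e).det = 1 := by
        rw [← hE', det_mul, det_mul, hgdet, mul_one, ← det_mul, huu', det_one]
      rw [det_diagonal, Fin.prod_univ_three] at h1
      exact h1
    have hcc : (starRingEnd ℂ) c = -c := by
      rw [hcdef, map_sub, Complex.conj_conj]; ring
    have hecj : ∀ j, e j - (starRingEnd ℂ) (e j) = c := by
      intro j
      have h2 : (starRingEnd ℂ) (((d j : ℂ) + c)/2) = ((d j : ℂ) + -c)/2 := by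
        rw [map_div₀, map_add, Complex.conj_ofReal, hcc, map_ofNat]
      rw [he]
      simp only []
      rw [h2]
      ring
    clear_value e
    have h1 := unit_same_im (hunit 0) (hunit 1) (by rw [hecj 0, hecj 1])
    have h2 := unit_same_im (hunit 0) (hunit 2) (by rw [hecj 0, hecj 2])
    rcases h1 with h1 | h1 <;> rcases h2 with h2 | h2
    · -- all equal : scalar matrix
      left
      refine ⟨e 0, ?_, ?_⟩
      · rw [h1, h2] at hdetE
        rw [pow_succ, pow_succ, pow_one]
        exact hdetE
      · have heq : e = fun _ => e 0 := by
          funext j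
          fin_cases j
          · rfl
          · exact h1
          · exact h2
        rw [hgE, heq, diag_const, Matrix.mul_smul, Matrix.smul_mul, Matrix.mul_one, huu]
    · -- e = (-1, -1, 1)
      rw [h1, h2] at hdetE
      have he0 : e 0 = -1 := by
        linear_combination (-(e 0)) * hunit 0 - hdetE
      have heq : e = ![-1, -1, 1] :=
        vec_ext e _ _ _ he0 (by rw [h1, he0]) (by rw [h2, he0]; simp)
      right
      obtain ⟨v, hv, hveq⟩ := su_fix (diagonal ![-1,-1,1]) u u.2
      exact ⟨v, hv, by rw [hgE, heq, hveq]⟩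
    · -- e = (-1, 1, -1)
      rw [h1, h2] at hdetE
      have he0 : e 0 = -1 := by
        linear_combination (-(e 0)) * hunit 0 - hdetE
      have heq : e = ![-1, 1, -1] :=
        vec_ext e _ _ _ he0 (by rw [h1, he0]; simp) (by rw [h2, he0])
      right
      have hw : (u : Matrix (Fin 3) (Fin 3) ℂ) * !![1,0,0;0,0,1;0,1,0] ∈ unitaryGroup (Fin 3) ℂ :=
        mul_mem u.2 perm_conj1.1
      obtain ⟨v, hv, hveq⟩ := su_fix (diagonal ![-1,-1,1]) _ hw
      refine ⟨v, hv, ?_⟩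
      rw [hgE, heq, ← perm_conj1.2, hveq, Matrix.star_mul]
      simp only [Matrix.mul_assoc]
    · -- e = (1, -1, -1)
      rw [h1, h2] at hdetE
      have hu0 : (starRingEnd ℂ) (e 0) = 1 := by
        linear_combination hdetE - (starRingEnd ℂ) (e 0) * hunit 0
      have he0 : e 0 = 1 := by
        have h3 := congrArg (starRingEnd ℂ) hu0
        simpa using h3
      have heq : e = ![1, -1, -1] :=
        vec_ext e _ _ _ he0 (by rw [h1, hu0]) (by rw [h2, hu0])
      right
      have hw : (u : Matrix (Fin 3) (Fin 3) ℂ) * !![0,0,1;0,1,0;1,0,0] ∈ unitaryGroup (Fin 3) ℂ :=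
        mul_mem u.2 perm_conj2.1
      obtain ⟨v, hv, hveq⟩ := su_fix (diagonal ![-1,-1,1]) _ hw
      refine ⟨v, hv, ?_⟩
      rw [hgE, heq, ← perm_conj2.2, hveq, Matrix.star_mul]
      simp only [Matrix.mul_assoc]
  · rintro (⟨ω, hω3, hωg⟩ | ⟨u, hu, hgu'⟩)
    · refine ⟨(starRingEnd ℂ) ω, 0, by simp, by simp, ?_⟩
      rw [hωg, star_smul, star_one]
      simp
    · obtain ⟨huu, hudet⟩ := mem_specialUnitaryGroup_iff.mp hu
      have hherm : gᴴ = g := by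
        have hD : (diagonal ![-1,-1,1] : Matrix (Fin 3) (Fin 3) ℂ)ᴴ = diagonal ![-1,-1,1] := by
          ext i j
          fin_cases i <;> fin_cases j <;>
            simp [Matrix.diagonal, Matrix.conjTranspose_apply, Matrix.vecHead, Matrix.vecTail]
        rw [hgu', show star u = uᴴ from rfl, conjTranspose_mul, conjTranspose_mul,
          conjTranspose_conjTranspose, hD, mul_assoc]
      have htr : g.trace = -1 := by
        rw [hgu', Matrix.trace_mul_cycle]
        rw [show star u * u = 1 from Matrix.mem_unitaryGroup_iff'.mp huu, one_mul]
        rw [Matrix.trace_diagonal]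
        simp [Fin.sum_univ_three]
      refine ⟨-(1/3 : ℂ), g + (1/3 : ℂ) • 1, ?_, ?_, ?_⟩
      · rw [conjTranspose_add, hherm, conjTranspose_smul, conjTranspose_one]
        norm_num
      · rw [Matrix.trace_add, htr, Matrix.trace_smul, Matrix.trace_one]
        norm_num
      · rw [show star g = gᴴ from rfl, hherm]
        rw [neg_smul]
        abel
end

section
/- With SU(3) ⊂ M(3,C) the standard embedding and h(g) = Re tr(g) the height function in the direction of the identity, the critical set of h on SU(3) is the disjoint union of the 3 isolated points {ωI : ω³ = 1} and the submanifold {g ∈ SU(3) : g conjugate to diag(−1,−1,1)}, and the latter set is diffeomorphic to the complex projective plane CP². -/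
open Matrix

/-- The critical set of the height function h(g) = Re tr(g) on SU(3) ⊂ M(3,ℂ):
g is critical iff g⁻¹ = star g lies in the normal space ν_I = ℂ·I + i·su(3). -/
def critSet : Set (Matrix (Fin 3) (Fin 3) ℂ) :=
  {g | g ∈ Matrix.specialUnitaryGroup (Fin 3) ℂ ∧
    ∃ (lam : ℂ) (Y : Matrix (Fin 3) (Fin 3) ℂ), Yᴴ = Y ∧ Y.trace = 0 ∧
      star g = lam • (1 : Matrix (Fin 3) (Fin 3) ℂ) + Y}

/-- The three isolated points ωI, ω³ = 1. -/
def cubeRootsId : Set (Matrix (Fin 3) (Fin 3) ℂ) :=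
  {g | ∃ ω : ℂ, ω ^ 3 = 1 ∧ g = ω • (1 : Matrix (Fin 3) (Fin 3) ℂ)}

/-- The conjugacy class of diag(−1,−1,1) in SU(3). -/
def conjClass : Set (Matrix (Fin 3) (Fin 3) ℂ) :=
  {g | ∃ u ∈ Matrix.specialUnitaryGroup (Fin 3) ℂ,
    g = u * Matrix.diagonal ![-1, -1, 1] * star u}

/-- The complex projective plane ℂP², as the projectivization of ℂ³. -/
abbrev CP2 : Type := Quotient (projectivizationSetoid ℂ (Fin 3 → ℂ))

/- STATEMENT 4: The critical set of h(g) = Re tr(g) on SU(3) is the disjoint union of the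
   3 points {ωI : ω³ = 1} and the conjugacy class of diag(−1,−1,1), and the latter is
   diffeomorphic (here: homeomorphic) to ℂP². -/


section Aux


lemma pair_cases (a b : ℂ) (him : a.im = b.im)
    (ha : (starRingEnd ℂ) a * a = 1) (hb : (starRingEnd ℂ) b * b = 1) :
    b = a ∨ b = -(starRingEnd ℂ) a := by
  have h1 : a.re ^ 2 + a.im ^ 2 = 1 := by
    have := congrArg Complex.re ha
    simp [Complex.mul_re, Complex.conj_re, Complex.conj_im] at this
    nlinarith [this]
  have h2 : b.re ^ 2 + b.im ^ 2 = 1 := by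
    have := congrArg Complex.re hb
    simp [Complex.mul_re, Complex.conj_re, Complex.conj_im] at this
    nlinarith [this]
  have h3 : a.im ^ 2 = b.im ^ 2 := by rw [him]
  have : (b.re - a.re) * (b.re + a.re) = 0 := by linear_combination h2 - h1 + h3
  rcases mul_eq_zero.mp this with h | h
  · left; apply Complex.ext <;> [skip; exact him.symm]
    linarith
  · right; apply Complex.ext
    · simp [Complex.conj_re]; linarith
    · simp [Complex.conj_im, him]

lemma key_cases (e : Fin 3 → ℂ) (him : ∀ j k : Fin 3, (e j).im = (e k).im)
    (hnorm : ∀ j, (starRingEnd ℂ) (e j) * e j = 1)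
    (hdet : e 0 * e 1 * e 2 = 1) :
    (∃ ω : ℂ, ω ^ 3 = 1 ∧ e = fun _ => ω) ∨
      e = ![(-1 : ℂ), -1, 1] ∨ e = ![(-1 : ℂ), 1, -1] ∨ e = ![(1 : ℂ), -1, -1] := by
  have h0 := hnorm 0
  rcases pair_cases (e 0) (e 1) (him 0 1) (hnorm 0) (hnorm 1) with h1 | h1 <;>
  rcases pair_cases (e 0) (e 2) (him 0 2) (hnorm 0) (hnorm 2) with h2 | h2
  · -- all equal
    left
    refine ⟨e 0, ?_, ?_⟩
    · rw [h1, h2] at hdet; linear_combination hdet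
    · funext j; fin_cases j <;> simp [h1, h2]
  · -- e1 = e0, e2 = -conj e0 : entries (-1,-1,1)
    have he0 : e 0 = -1 := by
      rw [h1, h2] at hdet
      linear_combination -hdet - e 0 * h0
    right; left
    have hc : (starRingEnd ℂ) (e 0) = -1 := by rw [he0]; simp
    funext j; fin_cases j <;> simp [h1, h2, he0, hc]
  · -- e1 = -conj e0, e2 = e0 : entries (-1,1,-1)
    have he0 : e 0 = -1 := by
      rw [h1, h2] at hdet
      linear_combination -hdet - e 0 * h0
    right; right; left
    have hc : (starRingEnd ℂ) (e 0) = -1 := by rw [he0]; simp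
    funext j; fin_cases j <;> simp [h1, h2, he0, hc]
  · -- e1 = e2 = -conj e0 : entries (1,-1,-1)
    have he0 : e 0 = 1 := by
      rw [h1, h2] at hdet
      linear_combination ((starRingEnd ℂ) (e 0) * e 0 + 1) * h0 - e 0 * hdet
    right; right; right
    have hc : (starRingEnd ℂ) (e 0) = 1 := by rw [he0]; simp
    funext j; fin_cases j <;> simp [h1, h2, he0, hc]

lemma mem_conjClass_of_unitary_conj (u : Matrix (Fin 3) (Fin 3) ℂ)
    (hu : u ∈ Matrix.unitaryGroup (Fin 3) ℂ)
    (P : Matrix (Fin 3) (Fin 3) ℂ) (hP : P ∈ Matrix.specialUnitaryGroup (Fin 3) ℂ)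
    (E : Matrix (Fin 3) (Fin 3) ℂ)
    (hE : E = P * Matrix.diagonal ![-1, -1, 1] * star P) :
    u * E * star u ∈ conjClass := by
  set c : ℂ := star u.det with hc
  have hdet : u.det * c = 1 := (Matrix.det_of_mem_unitary hu).2
  have hdet' : c * u.det = 1 := by rw [mul_comm]; exact hdet
  set Q : Matrix (Fin 3) (Fin 3) ℂ := Matrix.diagonal ![c, 1, 1] with hQ
  have hQstar : star Q = Matrix.diagonal ![u.det, 1, 1] := by
    have hv : star ![c, 1, 1] = ![u.det, 1, 1] := by
      funext i; fin_cases i <;> simp [hc]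
    show (Matrix.diagonal ![c, 1, 1])ᴴ = _
    rw [Matrix.diagonal_conjTranspose, hv]
  have hQunit : Q ∈ Matrix.unitaryGroup (Fin 3) ℂ := by
    rw [Matrix.mem_unitaryGroup_iff, hQ, hQstar, Matrix.diagonal_mul_diagonal]
    have hv : (fun i => (![c, 1, 1] : Fin 3 → ℂ) i * ![u.det, 1, 1] i) = fun _ => (1 : ℂ) := by
      funext i; fin_cases i <;> simp [hdet']
    rw [hv]
    simp [Matrix.diagonal_one]
  have hQD : Q * Matrix.diagonal ![-1, -1, 1] * star Q = Matrix.diagonal ![-1, -1, 1] := by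
    rw [hQ, hQstar, Matrix.diagonal_mul_diagonal, Matrix.diagonal_mul_diagonal]
    refine congrArg Matrix.diagonal ?_
    funext i; fin_cases i <;> simp [hdet']
  refine ⟨u * P * Q, ?_, ?_⟩
  · rw [Matrix.mem_specialUnitaryGroup_iff]
    refine ⟨mul_mem (mul_mem hu ((Matrix.mem_specialUnitaryGroup_iff.mp hP).1)) hQunit, ?_⟩
    rw [Matrix.det_mul, Matrix.det_mul, (Matrix.mem_specialUnitaryGroup_iff.mp hP).2, mul_one,
      hQ, Matrix.det_diagonal]
    rw [show ∏ i, (![c, 1, 1] : Fin 3 → ℂ) i = c by simp [Fin.prod_univ_three]]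
    exact hdet
  · rw [hE]
    calc u * (P * Matrix.diagonal ![-1, -1, 1] * star P) * star u
        = u * (P * (Q * Matrix.diagonal ![-1, -1, 1] * star Q) * star P) * star u := by
          rw [hQD]
      _ = u * P * Q * Matrix.diagonal ![-1, -1, 1] * star (u * P * Q) := by
          simp only [Matrix.star_mul]; noncomm_ring


noncomputable def P1 : Matrix (Fin 3) (Fin 3) ℂ := !![1,0,0; 0,0,1; 0,-1,0]
noncomputable def P2 : Matrix (Fin 3) (Fin 3) ℂ := !![0,0,1; 0,1,0; -1,0,0]

lemma P1_mem : P1 ∈ Matrix.specialUnitaryGroup (Fin 3) ℂ := by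
  rw [Matrix.mem_specialUnitaryGroup_iff]
  constructor
  · rw [Matrix.mem_unitaryGroup_iff]
    ext i j
    fin_cases i <;> fin_cases j <;>
      simp [P1, Matrix.mul_apply, Fin.sum_univ_three, Matrix.conjTranspose_apply,
        Matrix.one_apply]
  · simp [P1, Matrix.det_fin_three]

lemma P2_mem : P2 ∈ Matrix.specialUnitaryGroup (Fin 3) ℂ := by
  rw [Matrix.mem_specialUnitaryGroup_iff]
  constructor
  · rw [Matrix.mem_unitaryGroup_iff]
    ext i j
    fin_cases i <;> fin_cases j <;>
      simp [P2, Matrix.mul_apply, Fin.sum_univ_three, Matrix.conjTranspose_apply,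
        Matrix.one_apply]
  · simp [P2, Matrix.det_fin_three]

lemma P1_conj : Matrix.diagonal ![(-1 : ℂ), 1, -1] = P1 * Matrix.diagonal ![-1, -1, 1] * star P1 := by
  ext i j
  fin_cases i <;> fin_cases j <;>
    simp [P1, Matrix.mul_apply, Fin.sum_univ_three, Matrix.conjTranspose_apply,
      Matrix.diagonal_apply, Matrix.vecMul_diagonal]

lemma P2_conj : Matrix.diagonal ![(1 : ℂ), -1, -1] = P2 * Matrix.diagonal ![-1, -1, 1] * star P2 := by
  ext i j
  fin_cases i <;> fin_cases j <;>
    simp [P2, Matrix.mul_apply, Fin.sum_univ_three, Matrix.conjTranspose_apply,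
      Matrix.diagonal_apply, Matrix.vecMul_diagonal]


theorem crit_subset : critSet ⊆ cubeRootsId ∪ conjClass := by
  rintro g ⟨hgSU, lam, Y, hY, htr, hstar⟩
  have hgU : g ∈ Matrix.unitaryGroup (Fin 3) ℂ := (Matrix.mem_specialUnitaryGroup_iff.mp hgSU).1
  have hgdet : g.det = 1 := (Matrix.mem_specialUnitaryGroup_iff.mp hgSU).2
  have hg : g = (star lam) • (1 : Matrix (Fin 3) (Fin 3) ℂ) + Y := by
    have := congrArg star hstar
    rw [star_star] at this
    rw [this]
    show (lam • (1 : Matrix (Fin 3) (Fin 3) ℂ) + Y)ᴴ = _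
    rw [Matrix.conjTranspose_add, Matrix.conjTranspose_smul, Matrix.conjTranspose_one, hY]
  have hYh : Y.IsHermitian := hY
  set u : Matrix (Fin 3) (Fin 3) ℂ := (hYh.eigenvectorUnitary : Matrix (Fin 3) (Fin 3) ℂ)
    with hu_def
  have huU : u ∈ Matrix.unitaryGroup (Fin 3) ℂ := hYh.eigenvectorUnitary.2
  have hspec : Y = u * Matrix.diagonal (RCLike.ofReal ∘ hYh.eigenvalues) * star u :=
    hYh.spectral_theorem
  set d : Fin 3 → ℝ := hYh.eigenvalues with hd_def
  set e : Fin 3 → ℂ := fun j => star lam + (d j : ℂ) with he_def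
  have huu : u * star u = 1 := Matrix.mem_unitaryGroup_iff.mp huU
  have huu' : star u * u = 1 := Matrix.mem_unitaryGroup_iff'.mp huU
  have hgE : g = u * Matrix.diagonal e * star u := by
    have h1 : Matrix.diagonal e
        = (star lam) • (1 : Matrix (Fin 3) (Fin 3) ℂ)
          + Matrix.diagonal (RCLike.ofReal ∘ d) := by
      rw [Matrix.smul_one_eq_diagonal, Matrix.diagonal_add]
      rfl
    rw [hg, hspec, h1, Matrix.mul_add, Matrix.add_mul]
    congr 1
    rw [Matrix.mul_smul, Matrix.smul_mul, Matrix.mul_one, huu]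
  have hE_eq : Matrix.diagonal e = star u * g * u := by
    rw [hgE, mul_assoc, mul_assoc, huu', mul_one, ← mul_assoc, huu', one_mul]
  have hEU : Matrix.diagonal e ∈ Matrix.unitaryGroup (Fin 3) ℂ := by
    rw [hE_eq]
    exact mul_mem (mul_mem (Unitary.star_mem huU) hgU) huU
  have hnorm : ∀ j, (starRingEnd ℂ) (e j) * e j = 1 := by
    intro j
    have h1 := Matrix.mem_unitaryGroup_iff'.mp hEU
    have h2 : (star (Matrix.diagonal e) * Matrix.diagonal e) j j = (1 : Matrix (Fin 3) (Fin 3) ℂ) j j :=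
      by rw [h1]
    rwa [Matrix.star_eq_conjTranspose, Matrix.diagonal_conjTranspose,
      Matrix.diagonal_mul_diagonal, Matrix.diagonal_apply_eq, Matrix.one_apply_eq] at h2
  have hdet3 : e 0 * e 1 * e 2 = 1 := by
    have h1 : (Matrix.diagonal e).det = 1 := by
      rw [hE_eq, Matrix.det_mul, Matrix.det_mul, mul_comm, ← mul_assoc, ← Matrix.det_mul, huu,
        hgdet]
      simp
    rw [Matrix.det_diagonal, Fin.prod_univ_three] at h1
    exact h1
  have him : ∀ j k : Fin 3, (e j).im = (e k).im := by
    intro j k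
    simp [he_def, Complex.add_im, Complex.ofReal_im]
  rcases key_cases e him hnorm hdet3 with ⟨ω, hω, hωe⟩ | h | h | h
  · left
    refine ⟨ω, hω, ?_⟩
    rw [hgE, hωe, ← Matrix.smul_one_eq_diagonal, Matrix.mul_smul, Matrix.smul_mul,
      Matrix.mul_one, huu]
  · right
    rw [hgE, h]
    exact mem_conjClass_of_unitary_conj u huU 1 (one_mem _) _ (by rw [star_one, one_mul, mul_one])
  · right
    rw [hgE, h]
    exact mem_conjClass_of_unitary_conj u huU P1 P1_mem _ P1_conj
  · right
    rw [hgE, h]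
    exact mem_conjClass_of_unitary_conj u huU P2 P2_mem _ P2_conj

lemma cube_mul_conj {ω : ℂ} (hω : ω ^ 3 = 1) : ω * star ω = 1 := by
  have hn : ‖ω‖ ^ 3 = 1 := by rw [← norm_pow, hω]; simp
  have hn1 : ‖ω‖ = 1 := by nlinarith [norm_nonneg ω, sq_nonneg (‖ω‖ - 1), sq_nonneg (‖ω‖ + 1)]
  have h := Complex.mul_conj ω
  rw [Complex.normSq_eq_norm_sq] at h
  show ω * (starRingEnd ℂ) ω = 1
  rw [h, hn1]
  norm_num

lemma cubeRoots_subset : cubeRootsId ⊆ critSet := by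
  rintro g ⟨ω, hω, rfl⟩
  have hωs : ω * star ω = 1 := cube_mul_conj hω
  have hstar : star (ω • (1 : Matrix (Fin 3) (Fin 3) ℂ)) = star ω • 1 := by
    show (ω • (1 : Matrix (Fin 3) (Fin 3) ℂ))ᴴ = _
    rw [Matrix.conjTranspose_smul, Matrix.conjTranspose_one]
  refine ⟨Matrix.mem_specialUnitaryGroup_iff.mpr ⟨?_, ?_⟩, star ω, 0, by simp, by simp,
    by rw [hstar, add_zero]⟩
  · rw [Matrix.mem_unitaryGroup_iff, hstar, Matrix.smul_mul, Matrix.mul_smul, mul_one,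
      smul_smul, hωs, one_smul]
  · rw [Matrix.det_smul, Matrix.det_one, mul_one]
    simpa using hω

lemma conjClass_subset : conjClass ⊆ critSet := by
  rintro g ⟨u, huSU, rfl⟩
  have huU : u ∈ Matrix.unitaryGroup (Fin 3) ℂ := (Matrix.mem_specialUnitaryGroup_iff.mp huSU).1
  have hudet : u.det = 1 := (Matrix.mem_specialUnitaryGroup_iff.mp huSU).2
  have huu : u * star u = 1 := Matrix.mem_unitaryGroup_iff.mp huU
  have huu' : star u * u = 1 := Matrix.mem_unitaryGroup_iff'.mp huU
  set D : Matrix (Fin 3) (Fin 3) ℂ := Matrix.diagonal ![-1, -1, 1] with hD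
  have hDstar : star D = D := by
    show Dᴴ = D
    rw [hD, Matrix.diagonal_conjTranspose]
    refine congrArg Matrix.diagonal ?_
    funext i; fin_cases i <;> simp
  have hDD : D * D = 1 := by
    rw [hD, Matrix.diagonal_mul_diagonal, ← Matrix.diagonal_one]
    refine congrArg Matrix.diagonal ?_
    funext i; fin_cases i <;> simp
  set g := u * D * star u with hg
  have hgstar : star g = g := by
    rw [hg, Matrix.star_mul, Matrix.star_mul, star_star, hDstar, mul_assoc]
  have hgU : g ∈ Matrix.unitaryGroup (Fin 3) ℂ := by
    rw [Matrix.mem_unitaryGroup_iff, hgstar, hg]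
    calc u * D * star u * (u * D * star u) = u * (D * (star u * u) * D) * star u := by
          noncomm_ring
      _ = 1 := by rw [huu', mul_one, hDD, mul_one, huu]
  have hgdet : g.det = 1 := by
    rw [hg, Matrix.det_mul, Matrix.det_mul, hudet, one_mul,
      Matrix.star_eq_conjTranspose, Matrix.det_conjTranspose, hudet, Matrix.det_diagonal,
      Fin.prod_univ_three]
    simp
  have htrg : g.trace = -1 := by
    rw [hg, Matrix.trace_mul_comm, ← mul_assoc, huu', one_mul, hD, Matrix.trace_diagonal,
      Fin.sum_univ_three]
    simp
  refine ⟨Matrix.mem_specialUnitaryGroup_iff.mpr ⟨hgU, hgdet⟩,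
    (-1/3 : ℂ), g + (1/3 : ℂ) • 1, ?_, ?_, ?_⟩
  · rw [Matrix.conjTranspose_add, Matrix.conjTranspose_smul, Matrix.conjTranspose_one]
    rw [show gᴴ = g from hgstar]
    norm_num
  · rw [Matrix.trace_add, htrg, Matrix.trace_smul, Matrix.trace_one]
    norm_num
  · rw [hgstar]
    rw [show (-1/3 : ℂ) • (1 : Matrix (Fin 3) (Fin 3) ℂ) + (g + (1/3 : ℂ) • 1)
        = ((-1/3 : ℂ) + (1/3 : ℂ)) • 1 + g from by rw [add_smul]; abel]
    norm_num

lemma disj : Disjoint cubeRootsId conjClass := by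
  rw [Set.disjoint_left]
  rintro g ⟨ω, hω, rfl⟩ ⟨u, huSU, heq⟩
  have huU : u ∈ Matrix.unitaryGroup (Fin 3) ℂ := (Matrix.mem_specialUnitaryGroup_iff.mp huSU).1
  have huu : u * star u = 1 := Matrix.mem_unitaryGroup_iff.mp huU
  have huu' : star u * u = 1 := Matrix.mem_unitaryGroup_iff'.mp huU
  have hD : Matrix.diagonal ![(-1 : ℂ), -1, 1] = ω • 1 := by
    have := congrArg (fun m => star u * m * u) heq
    rw [Matrix.mul_smul, Matrix.smul_mul, mul_one, huu'] at this
    rw [mul_assoc, mul_assoc, huu', mul_one, ← mul_assoc, huu', one_mul] at this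
    rw [this]
  have h00 : (-1 : ℂ) = ω := by
    have := congrFun (congrFun hD 0) 0
    simpa [Matrix.diagonal_apply, Matrix.one_apply] using this
  have h22 : (1 : ℂ) = ω := by
    have := congrFun (congrFun hD 2) 2
    simpa [Matrix.diagonal_apply, Matrix.one_apply] using this
  rw [← h22] at h00
  norm_num at h00


noncomputable section

def sumSq (v : Fin 3 → ℂ) : ℂ := ∑ i, (starRingEnd ℂ) (v i) * v i

def Fmap (v : Fin 3 → ℂ) : Matrix (Fin 3) (Fin 3) ℂ :=
  (2 * (sumSq v)⁻¹) • Matrix.vecMulVec v (star v) - 1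

lemma sumSq_eq_real (v : Fin 3 → ℂ) : sumSq v = ((∑ i, Complex.normSq (v i) : ℝ) : ℂ) := by
  rw [sumSq]
  push_cast
  refine Finset.sum_congr rfl fun i _ => ?_
  rw [mul_comm, Complex.mul_conj]

lemma sumSq_ne_zero {v : Fin 3 → ℂ} (hv : v ≠ 0) : sumSq v ≠ 0 := by
  rw [sumSq_eq_real]
  have h : 0 < ∑ i, Complex.normSq (v i) := by
    obtain ⟨j, hj⟩ := Function.ne_iff.mp hv
    refine Finset.sum_pos' (fun i _ => Complex.normSq_nonneg _) ⟨j, Finset.mem_univ j, ?_⟩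
    exact Complex.normSq_pos.mpr hj
  exact_mod_cast ne_of_gt h

lemma sumSq_smul (c : ℂ) (v : Fin 3 → ℂ) :
    sumSq (c • v) = ((starRingEnd ℂ) c * c) * sumSq v := by
  rw [sumSq, sumSq, Finset.mul_sum]
  refine Finset.sum_congr rfl fun i _ => ?_
  simp [Pi.smul_apply, smul_eq_mul, _root_.map_mul]
  ring

lemma Fmap_smul {c : ℂ} (hc : c ≠ 0) (v : Fin 3 → ℂ) (hv : v ≠ 0) :
    Fmap (c • v) = Fmap v := by
  have hcc : (starRingEnd ℂ) c * c ≠ 0 := mul_ne_zero (by simpa using hc) hc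
  have hs := sumSq_ne_zero hv
  rw [Fmap, Fmap]
  congr 1
  have houter : Matrix.vecMulVec (c • v) (star (c • v))
      = ((starRingEnd ℂ) c * c) • Matrix.vecMulVec v (star v) := by
    ext i j
    simp [Matrix.vecMulVec_apply, Pi.smul_apply, smul_eq_mul, Matrix.smul_apply,
      Pi.star_apply, star_mul']
    ring
  rw [houter, sumSq_smul, smul_smul]
  congr 1
  field_simp
  exact mul_inv_cancel₀ (by simpa using hc)

lemma unitary_conj_eq (u : Matrix (Fin 3) (Fin 3) ℂ)
    (hu : u ∈ Matrix.unitaryGroup (Fin 3) ℂ) :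
    u * Matrix.diagonal ![-1, -1, 1] * star u
      = (2 : ℂ) • Matrix.vecMulVec (fun i => u i 2) (star fun i => u i 2) - 1 := by
  have huu : u * star u = 1 := Matrix.mem_unitaryGroup_iff.mp hu
  ext i j
  have h1 : (u * star u) i j = (1 : Matrix (Fin 3) (Fin 3) ℂ) i j := by rw [huu]
  rw [Matrix.mul_apply, Fin.sum_univ_three] at h1
  simp only [Matrix.mul_apply, Fin.sum_univ_three, Matrix.diagonal_apply,
    Matrix.conjTranspose_apply, Matrix.sub_apply, Matrix.smul_apply, Matrix.vecMulVec_apply,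
    Pi.star_apply, Matrix.star_apply, smul_eq_mul] at *
  simp only [Matrix.cons_val_zero, Matrix.cons_val_one, Matrix.head_cons, Matrix.cons_val_two]
  rw [← h1]
  simp [Matrix.diagonal_apply]
  ring

lemma exists_unitary_col (v : Fin 3 → ℂ) (hvs : sumSq v = 1) :
    ∃ u ∈ Matrix.unitaryGroup (Fin 3) ℂ, (fun i => u i 2) = v := by
  classical
  set E := EuclideanSpace ℂ (Fin 3)
  set v' : E := WithLp.toLp 2 v with hv'
  have hinner : (inner ℂ v' v' : ℂ) = 1 := by
    rw [PiLp.inner_apply]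
    simpa [RCLike.inner_apply, sumSq, hv', Complex.conj_mul'] using hvs
  have hnorm : ‖v'‖ = 1 := by
    have h := inner_self_eq_norm_sq_to_K (𝕜 := ℂ) v'
    rw [hinner] at h
    have h2 : (‖v'‖ : ℂ) ^ 2 = 1 := h.symm
    have h3 : (‖v'‖ : ℝ) ^ 2 = 1 := by exact_mod_cast h2
    nlinarith [norm_nonneg v']
  set w : Fin 3 → E := fun _ => v' with hw
  have horth : Orthonormal ℂ (({2} : Set (Fin 3)).restrict w) := by
    constructor
    · rintro ⟨i, hi⟩
      exact hnorm
    · rintro ⟨i, hi⟩ ⟨j, hj⟩ hij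
      exact absurd (Subtype.ext ((Set.mem_singleton_iff.mp hi).trans
        (Set.mem_singleton_iff.mp hj).symm)) hij
  obtain ⟨b, hb⟩ := horth.exists_orthonormalBasis_extension_of_card_eq
    (by rw [Fintype.card_fin]; exact finrank_euclideanSpace_fin)
  have hb2 : b 2 = v' := hb 2 rfl
  refine ⟨Matrix.of fun i j => b j i, ?_, ?_⟩
  · rw [Matrix.mem_unitaryGroup_iff']
    ext i j
    have horthb := orthonormal_iff_ite.mp b.orthonormal i j
    rw [PiLp.inner_apply] at horthb
    simp only [RCLike.inner_apply] at horthb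
    rw [Matrix.mul_apply]
    simp only [Matrix.conjTranspose_apply, Matrix.of_apply, Matrix.star_apply]
    rw [show ∑ k, star ((b i) k) * (b j) k = if i = j then 1 else 0 from by
      simpa [mul_comm] using horthb]
    simp [Matrix.one_apply]
  · funext i
    simp [hb2, hv']

lemma Fmap_mem_of_unit (v : Fin 3 → ℂ) (hvs : sumSq v = 1) : Fmap v ∈ conjClass := by
  obtain ⟨u, huU, hcol⟩ := exists_unitary_col v hvs
  have h := unitary_conj_eq u huU
  rw [hcol] at h
  have : Fmap v = u * Matrix.diagonal ![-1, -1, 1] * star u := by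
    rw [Fmap, hvs, h]
    norm_num
  rw [this]
  exact mem_conjClass_of_unitary_conj u huU 1 (one_mem _) _ (by rw [star_one, one_mul, mul_one])

lemma Fmap_mem {v : Fin 3 → ℂ} (hv : v ≠ 0) : Fmap v ∈ conjClass := by
  set r : ℝ := Real.sqrt (∑ i, Complex.normSq (v i)) with hr
  have hpos : 0 < ∑ i, Complex.normSq (v i) := by
    obtain ⟨j, hj⟩ := Function.ne_iff.mp hv
    refine Finset.sum_pos' (fun i _ => Complex.normSq_nonneg _) ⟨j, Finset.mem_univ j, ?_⟩
    exact Complex.normSq_pos.mpr hj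
  have hrpos : 0 < r := Real.sqrt_pos.mpr hpos
  have hrne : ((r : ℝ) : ℂ)⁻¹ ≠ 0 := by
    simp only [ne_eq, inv_eq_zero, Complex.ofReal_eq_zero]
    exact ne_of_gt hrpos
  have hsum : sumSq (((r : ℝ) : ℂ)⁻¹ • v) = 1 := by
    rw [sumSq_smul, sumSq_eq_real]
    have : (starRingEnd ℂ) (((r : ℝ) : ℂ)⁻¹) = ((r : ℝ) : ℂ)⁻¹ := by
      rw [← Complex.ofReal_inv, Complex.conj_ofReal]
    rw [this, ← Complex.ofReal_inv]
    rw [show ((r⁻¹ : ℝ) : ℂ) * (r⁻¹ : ℝ) * ((∑ i, Complex.normSq (v i) : ℝ) : ℂ)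
        = (((r⁻¹ * r⁻¹ * ∑ i, Complex.normSq (v i) : ℝ)) : ℂ) from by push_cast; ring]
    rw [show r⁻¹ * r⁻¹ * ∑ i, Complex.normSq (v i) = 1 from by
      field_simp
      exact (Real.sq_sqrt hpos.le).symm]
    norm_num
  have := Fmap_mem_of_unit _ hsum
  rwa [Fmap_smul hrne v hv] at this

lemma Fmap_surj {g : Matrix (Fin 3) (Fin 3) ℂ} (hg : g ∈ conjClass) :
    ∃ v : Fin 3 → ℂ, v ≠ 0 ∧ Fmap v = g := by
  obtain ⟨u, huSU, rfl⟩ := hg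
  have huU : u ∈ Matrix.unitaryGroup (Fin 3) ℂ := (Matrix.mem_specialUnitaryGroup_iff.mp huSU).1
  set v : Fin 3 → ℂ := fun i => u i 2 with hv
  have huu' : star u * u = 1 := Matrix.mem_unitaryGroup_iff'.mp huU
  have hsum : sumSq v = 1 := by
    have h22 : (star u * u) 2 2 = (1 : Matrix (Fin 3) (Fin 3) ℂ) 2 2 := by rw [huu']
    rw [Matrix.mul_apply] at h22
    simp only [Matrix.conjTranspose_apply, Matrix.one_apply_eq] at h22
    rw [sumSq]
    simpa using h22
  have hvne : v ≠ 0 := by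
    intro h0
    rw [h0] at hsum
    simp [sumSq] at hsum
  refine ⟨v, hvne, ?_⟩
  rw [Fmap, hsum, unitary_conj_eq u huU]
  norm_num
  rfl

lemma Fmap_inj {v w : Fin 3 → ℂ} (hv : v ≠ 0) (hw : w ≠ 0) (h : Fmap v = Fmap w) :
    ∃ c : ℂˣ, c • w = v := by
  have hsv := sumSq_ne_zero hv
  have hsw := sumSq_ne_zero hw
  have hent : ∀ i j, (2 * (sumSq v)⁻¹) * (v i * (starRingEnd ℂ) (v j))
      = (2 * (sumSq w)⁻¹) * (w i * (starRingEnd ℂ) (w j)) := by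
    intro i j
    have := congrFun (congrFun (congrArg (fun m => m + (1 : Matrix (Fin 3) (Fin 3) ℂ)) h) i) j
    simp only [Fmap, sub_add_cancel] at this
    simpa [Matrix.smul_apply, Matrix.vecMulVec_apply, Pi.star_apply, smul_eq_mul,
      mul_assoc] using this
  obtain ⟨j0, hj0⟩ := Function.ne_iff.mp hv
  simp only [Pi.zero_apply] at hj0
  have hwj0 : w j0 ≠ 0 := by
    intro h0
    have := hent j0 j0
    rw [h0] at this
    simp only [map_zero, mul_zero, zero_mul] at this
    have hvv : v j0 * (starRingEnd ℂ) (v j0) ≠ 0 :=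
      mul_ne_zero hj0 (by simpa using hj0)
    exact (mul_ne_zero (mul_ne_zero two_ne_zero (inv_ne_zero hsv)) hvv) this
  set a : ℂ := (2 * (sumSq v)⁻¹) * (starRingEnd ℂ) (v j0) with ha
  set b : ℂ := (2 * (sumSq w)⁻¹) * (starRingEnd ℂ) (w j0) with hb
  have hane : a ≠ 0 := mul_ne_zero (mul_ne_zero two_ne_zero (inv_ne_zero hsv)) (by simpa using hj0)
  have hbne : b ≠ 0 := mul_ne_zero (mul_ne_zero two_ne_zero (inv_ne_zero hsw)) (by simpa using hwj0)
  have hkey : ∀ i, a * v i = b * w i := by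
    intro i
    have := hent i j0
    rw [ha, hb]
    ring_nf
    ring_nf at this
    linear_combination this
  refine ⟨Units.mk0 (a⁻¹ * b) (mul_ne_zero (inv_ne_zero hane) hbne), ?_⟩
  funext i
  have this2 : (2 * (sumSq v)⁻¹ * (starRingEnd ℂ) (v j0)) * v i
      = (2 * (sumSq w)⁻¹ * (starRingEnd ℂ) (w j0)) * w i := by
    rw [← ha, ← hb]; exact hkey i
  simp only [Units.smul_def, Units.val_mk0, Pi.smul_apply, smul_eq_mul]
  field_simp
  linear_combination -this2

lemma contFmap : Continuous (fun x : {v : Fin 3 → ℂ // v ≠ 0} => Fmap ↑x) := by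
  have hcoord : ∀ k : Fin 3, Continuous fun x : {v : Fin 3 → ℂ // v ≠ 0} =>
      (x : Fin 3 → ℂ) k := fun k => (continuous_apply k).comp continuous_subtype_val
  have hsum : Continuous fun x : {v : Fin 3 → ℂ // v ≠ 0} => sumSq ↑x := by
    unfold sumSq
    exact continuous_finset_sum _ fun k _ =>
      (continuous_star.comp (hcoord k)).mul (hcoord k)
  have hinv : Continuous fun x : {v : Fin 3 → ℂ // v ≠ 0} => (sumSq ↑x)⁻¹ :=
    hsum.inv₀ fun x => sumSq_ne_zero x.2
  refine continuous_matrix fun i j => ?_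
  have hfe : (fun x : {v : Fin 3 → ℂ // v ≠ 0} => Fmap ↑x i j)
      = fun x : {v : Fin 3 → ℂ // v ≠ 0} =>
        2 * (sumSq ↑x)⁻¹ * ((x : Fin 3 → ℂ) i * (starRingEnd ℂ) ((x : Fin 3 → ℂ) j))
        - (1 : Matrix (Fin 3) (Fin 3) ℂ) i j := by
    funext x
    simp [Fmap, Matrix.sub_apply, Matrix.smul_apply, Matrix.vecMulVec_apply, Pi.star_apply,
      smul_eq_mul, mul_assoc]
  rw [hfe]
  exact ((continuous_const.mul hinv).mul
    ((hcoord i).mul (continuous_star.comp (hcoord j)))).sub continuous_const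

lemma Fmap_respects : ∀ (a b : {v : Fin 3 → ℂ // v ≠ 0}),
    (projectivizationSetoid ℂ (Fin 3 → ℂ)).r a b → Fmap ↑a = Fmap ↑b := by
  rintro a b ⟨c, hc⟩
  have hc' : (c : ℂ) • (b : Fin 3 → ℂ) = ↑a := by
    rw [← hc]; rfl
  rw [← hc', Fmap_smul (Units.ne_zero c) _ b.2]

noncomputable def Gfun : CP2 → Matrix (Fin 3) (Fin 3) ℂ :=
  Quotient.lift (fun x : {v : Fin 3 → ℂ // v ≠ 0} => Fmap ↑x) Fmap_respects

lemma Gfun_mem : ∀ q : CP2, Gfun q ∈ conjClass := by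
  refine Quotient.ind ?_
  intro x
  exact Fmap_mem x.2

lemma Gfun_cont : Continuous Gfun := contFmap.quotient_lift Fmap_respects

noncomputable def Gequiv : CP2 ≃ conjClass := by
  refine Equiv.ofBijective (fun q => ⟨Gfun q, Gfun_mem q⟩) ⟨?_, ?_⟩
  · refine Quotient.ind₂ ?_
    intro x y h
    rw [Subtype.ext_iff] at h
    have h' : Fmap ↑x = Fmap ↑y := h
    obtain ⟨c, hc⟩ := Fmap_inj x.2 y.2 h'
    exact Quotient.sound ⟨c, hc⟩
  · rintro ⟨g, hg⟩
    obtain ⟨v, hv, hFv⟩ := Fmap_surj hg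
    exact ⟨Quotient.mk _ ⟨v, hv⟩, Subtype.ext hFv⟩

instance : CompactSpace CP2 := by
  set φ : Metric.sphere (0 : Fin 3 → ℂ) 1 → CP2 := fun v =>
    Quotient.mk _ ⟨(v : Fin 3 → ℂ), by
      have h := mem_sphere_zero_iff_norm.mp v.2
      intro h0
      rw [h0] at h
      simp at h⟩ with hφ
  have hφc : Continuous φ := by
    apply Continuous.comp
    · exact continuous_quot_mk
    · exact Continuous.subtype_mk continuous_subtype_val _
  have hφs : Function.Surjective φ := by
    refine Quotient.ind ?_
    intro x
    have hx : (x : Fin 3 → ℂ) ≠ 0 := x.2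
    have hnx : ‖(x : Fin 3 → ℂ)‖ ≠ 0 := norm_ne_zero_iff.mpr hx
    set c : ℂ := ((‖(x : Fin 3 → ℂ)‖⁻¹ : ℝ) : ℂ) with hcdef
    have hcne : c ≠ 0 := by
      simp [hcdef, hnx]
    have hmem : c • (x : Fin 3 → ℂ) ∈ Metric.sphere (0 : Fin 3 → ℂ) 1 := by
      rw [mem_sphere_zero_iff_norm, norm_smul, hcdef, Complex.norm_real, Real.norm_eq_abs,
        abs_of_nonneg (by positivity)]
      field_simp
    refine ⟨⟨c • (x : Fin 3 → ℂ), hmem⟩, ?_⟩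
    refine Quotient.sound ⟨Units.mk0 c hcne, ?_⟩
    rfl
  constructor
  rw [← Set.range_eq_univ.mpr hφs]
  exact isCompact_range hφc

theorem part3 : Nonempty ((conjClass : Set (Matrix (Fin 3) (Fin 3) ℂ)) ≃ₜ CP2) := by
  have hcont : Continuous (Gequiv : CP2 → conjClass) := by
    exact Continuous.subtype_mk Gfun_cont _
  exact ⟨(Continuous.homeoOfEquivCompactToT2 (f := Gequiv) hcont).symm⟩

end

end Aux

theorem stmt4 :
    critSet = cubeRootsId ∪ conjClass ∧
    Disjoint cubeRootsId conjClass ∧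
    Nonempty (conjClass ≃ₜ CP2) := by
  exact ⟨Set.Subset.antisymm crit_subset (Set.union_subset cubeRoots_subset conjClass_subset),
    disj, part3⟩
end

section
/- Identify the Cayley algebra Ca = H ⊕ He (Cayley–Dickson construction) with R⁸, and define Spin(8) = {(A,B,C) ∈ SO(8)³ : A(ξη) = B(ξ)C(η) for all ξ, η ∈ Ca}. Then for every (A,B,C) in this set, the conditions A(1) = 1 and C = B̃ are equivalent, where B̃(x) = conj(B(conj(x))). -/
open Quaternion

/-- The Cayley algebra (octonions) Ca = ℍ ⊕ ℍe via the Cayley–Dickson process,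
identified with ℝ⁸. -/
abbrev Ca : Type := ℍ[ℝ] × ℍ[ℝ]

/-- Octonion (Cayley–Dickson) multiplication on Ca = ℍ ⊕ ℍe. -/
noncomputable def omul (x y : Ca) : Ca :=
  (x.1 * y.1 - star y.2 * x.2, y.2 * x.1 + x.2 * star y.1)

/-- Octonion conjugation. -/
def oconj (x : Ca) : Ca := (star x.1, -x.2)

/-- The squared Euclidean norm on Ca ≅ ℝ⁸. -/
def onormSq (x : Ca) : ℝ := Quaternion.normSq x.1 + Quaternion.normSq x.2

/-- The octonion unit. -/
noncomputable def o1 : Ca := (1, 0)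

/-!
Put `b = B 1` and `c = C 1`; both are unit octonions. Specialising `A (ξη) = B ξ C η` to `ξ = 1`
and to `η = 1`, and cancelling with the identities `x̄ (x y) = |x|² y` and `(y x) x̄ = |x|² y`
(which hold in Ca although it is not associative), gives `C y = b̄ A y` and `B y = (A y) c̄`.
If `A 1 = 1` then `c = b̄`, and `A`, being orthogonal and fixing `1`, commutes with conjugation,
so `conj (B x̄) = conj ((A x̄) b) = b̄ A x = C x`. Conversely, if `C = B̃` then
`A 1 = B 1 · conj (B 1) = |b|² = 1`.
-/

theorem omul_o1 (x : Ca) : omul x o1 = x := by simp [omul, o1]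

theorem o1_omul (x : Ca) : omul o1 x = x := by simp [omul, o1]

theorem oconj_oconj (x : Ca) : oconj (oconj x) = x := by simp [oconj]

theorem oconj_o1 : oconj o1 = o1 := by simp [oconj, o1]

theorem onormSq_o1 : onormSq o1 = 1 := by simp [onormSq, o1]

theorem onormSq_add_o1 (x : Ca) : onormSq (x + o1) = onormSq x + 2 * x.1.re + 1 := by
  simp only [onormSq, o1, Prod.fst_add, normSq_add, map_one, star_one, mul_one, Prod.snd_add,
    add_zero]
  ring

theorem oconj_eq_smul_o1_sub (x : Ca) : oconj x = (2 * x.1.re) • o1 - x := by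
  ext1
  · simp [oconj, o1, star_eq_two_re_sub, ← coe_one, smul_coe]
  · simp [oconj, o1]

theorem oconj_omul (x y : Ca) : oconj (omul x y) = omul (oconj y) (oconj x) := by
  ext1 <;> simp [omul, oconj, star_mul]

theorem omul_oconj_self (x : Ca) : omul x (oconj x) = onormSq x • o1 := by
  ext1
  · simp [omul, oconj, onormSq, o1, self_mul_star, star_mul_self, ← coe_add, ← coe_mul_eq_smul]
  · simp [omul, oconj, o1]

theorem omul_oconj_omul (x y : Ca) : omul (oconj x) (omul x y) = onormSq x • y := by
  obtain ⟨a, b⟩ := x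
  obtain ⟨c, d⟩ := y
  simp only [omul, oconj, onormSq, star_add, star_sub, star_mul, star_star, Prod.smul_mk,
    add_smul]
  congr 1
  · calc _ = star a * a * c + c * (star b * b) := by noncomm_ring
      _ = _ := by rw [star_mul_self, star_mul_self, coe_mul_eq_smul, mul_coe_eq_smul]
  · calc _ = d * (a * star a) + b * star b * d := by noncomm_ring
      _ = _ := by rw [self_mul_star, self_mul_star, coe_mul_eq_smul, mul_coe_eq_smul, add_comm]

theorem omul_omul_oconj (x y : Ca) : omul (omul y x) (oconj x) = onormSq x • y := by
  obtain ⟨a, b⟩ := x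
  obtain ⟨c, d⟩ := y
  simp only [omul, oconj, onormSq, star_star, star_neg, Prod.smul_mk, add_smul]
  congr 1
  · calc _ = c * (a * star a) + star b * b * c := by noncomm_ring
      _ = _ := by rw [self_mul_star, star_mul_self, coe_mul_eq_smul, mul_coe_eq_smul, add_comm]
  · calc _ = d * (star a * a) + b * star b * d := by noncomm_ring
      _ = _ := by rw [star_mul_self, self_mul_star, coe_mul_eq_smul, mul_coe_eq_smul, add_comm]

theorem map_oconj (A : Ca →ₗ[ℝ] Ca) (hA : ∀ x, onormSq (A x) = onormSq x) (hA1 : A o1 = o1)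
    (x : Ca) : A (oconj x) = oconj (A x) := by
  have hre : (A x).1.re = x.1.re := by
    -- polarisation against `1`, which `A` fixes
    have h := hA (x + o1)
    rw [map_add, hA1, onormSq_add_o1, onormSq_add_o1, hA] at h
    linarith
  rw [oconj_eq_smul_o1_sub, map_sub, map_smul, hA1, oconj_eq_smul_o1_sub, hre]

section Triality

variable {A B C : Ca →ₗ[ℝ] Ca} (htri : ∀ ξ η : Ca, A (omul ξ η) = omul (B ξ) (C η))
include htri

theorem triality_right_eq_omul (hB1 : onormSq (B o1) = 1) (y : Ca) :
    C y = omul (oconj (B o1)) (A y) := by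
  rw [← o1_omul y, htri, o1_omul, omul_oconj_omul, hB1, one_smul]

theorem triality_left_eq_omul (hC1 : onormSq (C o1) = 1) (y : Ca) :
    B y = omul (A y) (oconj (C o1)) := by
  rw [← omul_o1 y, htri, omul_o1, omul_omul_oconj, hC1, one_smul]

end Triality

theorem stmt9_general (A B C : Ca →ₗ[ℝ] Ca)
    (hA : ∀ x, onormSq (A x) = onormSq x) (hB : ∀ x, onormSq (B x) = onormSq x)
    (hC : ∀ x, onormSq (C x) = onormSq x)
    (htri : ∀ ξ η : Ca, A (omul ξ η) = omul (B ξ) (C η)) :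
    A o1 = o1 ↔ ∀ x, C x = oconj (B (oconj x)) := by
  have hB1 : onormSq (B o1) = 1 := by rw [hB, onormSq_o1]
  constructor
  · intro hA1 x
    have hCA := triality_right_eq_omul htri hB1
    have hC1 : C o1 = oconj (B o1) := by rw [hCA, hA1, omul_o1]
    have hBA := triality_left_eq_omul htri (by rw [hC, onormSq_o1])
    rw [hCA x, hBA (oconj x), hC1, oconj_omul, oconj_oconj, map_oconj A hA hA1, oconj_oconj]
  · intro hCB
    calc A o1 = A (omul o1 o1) := by rw [omul_o1]
      _ = o1 := by rw [htri, hCB, oconj_o1, omul_oconj_self, hB1, one_smul]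

theorem stmt9 (A B C : Ca →ₗ[ℝ] Ca)
    (hA : ∀ x, onormSq (A x) = onormSq x) (hB : ∀ x, onormSq (B x) = onormSq x)
    (hC : ∀ x, onormSq (C x) = onormSq x)
    (hdA : LinearMap.det A = 1) (hdB : LinearMap.det B = 1) (hdC : LinearMap.det C = 1)
    (htri : ∀ ξ η : Ca, A (omul ξ η) = omul (B ξ) (C η)) :
    A o1 = o1 ↔ ∀ x, C x = oconj (B (oconj x)) :=
  stmt9_general A B C hA hB hC htri
end

section
/- Let H = {(e^{kt}, e^{kt}, e^{−kt}) : t ∈ R} be the circle subgroup of Sp(1)³ (k the quaternion unit). Consider the action of Sp(1)³ on H ⊕ H ⊕ H (quaternion triples) given by (p,q,s)·(x,y,z) = (p x q̄, p y s̄, q z s̄). Then the isotropy subgroup of the point (1, i, j) is exactly H, and the fixed point subspace of H in H ⊕ H ⊕ H is W^H = span_R⟨1,k⟩ ⊕ span_R⟨i,j⟩ ⊕ span_R⟨i,j⟩. -/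
open Quaternion

/-- e^{kt} = cos t + k sin t. -/
noncomputable def ekt (t : ℝ) : ℍ[ℝ] := ⟨Real.cos t, 0, 0, Real.sin t⟩

noncomputable def qi : ℍ[ℝ] := ⟨0,1,0,0⟩
noncomputable def qj : ℍ[ℝ] := ⟨0,0,1,0⟩
noncomputable def qk : ℍ[ℝ] := ⟨0,0,0,1⟩

private lemma unit_star_mul' (a : ℍ[ℝ]) (h : ‖a‖ = 1) : star a * a = 1 := by
  have h2 : Quaternion.normSq a = 1 := by
    rw [Quaternion.normSq_eq_norm_mul_self, h]; norm_num
  rw [Quaternion.star_mul_self, h2]; norm_num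

private lemma ekt_norm' (t : ℝ) : ‖ekt t‖ = 1 := by
  have h : ‖ekt t‖ * ‖ekt t‖ = 1 := by
    rw [← Quaternion.normSq_eq_norm_mul_self, Quaternion.normSq_def']
    have h := Real.sin_sq_add_cos_sq t
    simp only [ekt]
    nlinarith [h]
  nlinarith [norm_nonneg (ekt t)]

set_option maxHeartbeats 1000000 in
private lemma part1fwd' (p q s : ℍ[ℝ]) (hp : ‖p‖ = 1) (hq : ‖q‖ = 1) (hs : ‖s‖ = 1)
    (h1 : p * 1 * star q = 1) (h2 : p * qi * star s = qi) (h3 : q * qj * star s = qj) :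
    ∃ t : ℝ, (p, q, s) = (ekt t, ekt t, star (ekt t)) := by
  have hq1 : star q * q = 1 := unit_star_mul' q hq
  have hp1 : star p * p = 1 := unit_star_mul' p hp
  have hpq : p = q := by
    have h := congrArg (· * q) h1
    simp only [mul_one, one_mul, mul_assoc, hq1] at h
    simpa using h
  have e1 : qi * star s = star p * qi := by
    have h := congrArg (star p * ·) h2
    simp only [← mul_assoc, hp1, one_mul] at h
    simpa [mul_assoc] using h
  have e2 : qj * star s = star p * qj := by
    have h := congrArg (star p * ·) h3
    rw [← hpq] at h
    simp only [← mul_assoc, hp1, one_mul] at h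
    simpa [mul_assoc] using h
  simp only [Quaternion.ext_iff, Quaternion.re_mul, Quaternion.imI_mul, Quaternion.imJ_mul,
    Quaternion.imK_mul, Quaternion.re_star, Quaternion.imI_star, Quaternion.imJ_star,
    Quaternion.imK_star] at e1 e2
  simp only [qi, qj] at e1 e2
  obtain ⟨f1, f2, f3, f4⟩ := e1
  obtain ⟨g1, g2, g3, g4⟩ := e2
  have hb : p.imI = 0 := by linarith
  have hc : p.imJ = 0 := by linarith
  have hsre : s.re = p.re := by linarith
  have hsi : s.imI = 0 := by linarith
  have hsj : s.imJ = 0 := by linarith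
  have hsk : s.imK = -p.imK := by linarith
  have hnorm : p.re ^ 2 + p.imK ^ 2 = 1 := by
    have h2 : Quaternion.normSq p = 1 := by
      rw [Quaternion.normSq_eq_norm_mul_self, hp]; norm_num
    rw [Quaternion.normSq_def'] at h2
    nlinarith [h2]
  have hre1 : -1 ≤ p.re := by nlinarith [sq_nonneg (p.re + 1), sq_nonneg p.imK]
  have hre2 : p.re ≤ 1 := by nlinarith [sq_nonneg (p.re - 1), sq_nonneg p.imK]
  have hsq : Real.sqrt (1 - p.re ^ 2) = |p.imK| := by
    rw [show (1 : ℝ) - p.re ^ 2 = p.imK ^ 2 by linarith, Real.sqrt_sq_eq_abs]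
  obtain ⟨t, hcos, hsin⟩ : ∃ t : ℝ, Real.cos t = p.re ∧ Real.sin t = p.imK := by
    rcases le_or_gt 0 p.imK with hk | hk
    · exact ⟨Real.arccos p.re, Real.cos_arccos hre1 hre2,
        by rw [Real.sin_arccos, hsq, abs_of_nonneg hk]⟩
    · refine ⟨-Real.arccos p.re, by rw [Real.cos_neg]; exact Real.cos_arccos hre1 hre2, ?_⟩
      rw [Real.sin_neg, Real.sin_arccos, hsq, abs_of_neg hk, neg_neg]
  refine ⟨t, ?_⟩
  rw [Prod.ext_iff, Prod.ext_iff]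
  refine ⟨?_, ?_, ?_⟩ <;>
    simp only [Quaternion.ext_iff, Quaternion.re_star, Quaternion.imI_star, Quaternion.imJ_star,
      Quaternion.imK_star] <;>
    simp [Quaternion.ext_iff, ekt, hcos, hsin, hb, hc, hsre, hsi, hsj, hsk, ← hpq]

private lemma part1bwd' (t : ℝ) :
    ekt t * 1 * star (ekt t) = 1 ∧ ekt t * qi * star (star (ekt t)) = qi ∧
      ekt t * qj * star (star (ekt t)) = qj := by
  have h := Real.sin_sq_add_cos_sq t
  refine ⟨?_, ?_, ?_⟩ <;>
    simp only [Quaternion.ext_iff, Quaternion.re_mul, Quaternion.imI_mul, Quaternion.imJ_mul,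
      Quaternion.imK_mul, Quaternion.re_star, Quaternion.imI_star,
      Quaternion.imJ_star, Quaternion.imK_star, star_star, mul_one] <;>
    simp only [qi, qj, ekt] <;>
    norm_num <;>
    constructorm* _ ∧ _ <;> nlinarith [h]

private lemma part2fwd' (x y z : ℍ[ℝ])
    (h : ∀ t : ℝ, ekt t * x * star (ekt t) = x ∧
        ekt t * y * star (star (ekt t)) = y ∧ ekt t * z * star (star (ekt t)) = z) :
    x ∈ Submodule.span ℝ ({1, qk} : Set ℍ[ℝ]) ∧
      y ∈ Submodule.span ℝ ({qi, qj} : Set ℍ[ℝ]) ∧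
      z ∈ Submodule.span ℝ ({qi, qj} : Set ℍ[ℝ]) := by
  obtain ⟨h1, h2, h3⟩ := h (Real.pi / 2)
  have he : ekt (Real.pi / 2) = qk := by
    ext <;> simp [ekt, qk, Quaternion.ext_iff, Real.cos_pi_div_two, Real.sin_pi_div_two]
  rw [he] at h1 h2 h3
  simp only [Quaternion.ext_iff, Quaternion.re_mul, Quaternion.imI_mul, Quaternion.imJ_mul,
    Quaternion.imK_mul, Quaternion.re_star, Quaternion.imI_star, Quaternion.imJ_star,
    Quaternion.imK_star, star_star] at h1 h2 h3
  simp only [qk] at h1 h2 h3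
  refine ⟨Submodule.mem_span_pair.mpr ⟨x.re, x.imK, ?_⟩,
    Submodule.mem_span_pair.mpr ⟨y.imI, y.imJ, ?_⟩,
    Submodule.mem_span_pair.mpr ⟨z.imI, z.imJ, ?_⟩⟩ <;>
    simp only [Quaternion.ext_iff] <;>
    simp only [Quaternion.re_add, Quaternion.imI_add, Quaternion.imJ_add, Quaternion.imK_add,
      Quaternion.re_smul, Quaternion.imI_smul, Quaternion.imJ_smul, Quaternion.imK_smul,
      Quaternion.re_one, Quaternion.imI_one, Quaternion.imJ_one, Quaternion.imK_one] <;>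
    simp only [qi, qj, qk] <;>
    simp <;>
    constructorm* _ ∧ _ <;> first | rfl | linarith [h1.1,h1.2.1,h1.2.2.1,h1.2.2.2,
      h2.1,h2.2.1,h2.2.2.1,h2.2.2.2, h3.1,h3.2.1,h3.2.2.1,h3.2.2.2]

private lemma part2bwd' (x y z : ℍ[ℝ])
    (hx : x ∈ Submodule.span ℝ ({1, qk} : Set ℍ[ℝ]))
    (hy : y ∈ Submodule.span ℝ ({qi, qj} : Set ℍ[ℝ]))
    (hz : z ∈ Submodule.span ℝ ({qi, qj} : Set ℍ[ℝ])) (t : ℝ) :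
    ekt t * x * star (ekt t) = x ∧
      ekt t * y * star (star (ekt t)) = y ∧ ekt t * z * star (star (ekt t)) = z := by
  obtain ⟨a, b, hx⟩ := Submodule.mem_span_pair.mp hx
  obtain ⟨c, d, hy⟩ := Submodule.mem_span_pair.mp hy
  obtain ⟨e, f, hz⟩ := Submodule.mem_span_pair.mp hz
  subst hx hy hz
  have h := Real.sin_sq_add_cos_sq t
  refine ⟨?_, ?_, ?_⟩ <;>
    simp only [Quaternion.ext_iff, Quaternion.re_mul, Quaternion.imI_mul, Quaternion.imJ_mul,
      Quaternion.imK_mul, Quaternion.re_star, Quaternion.imI_star,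
      Quaternion.imJ_star, Quaternion.imK_star, star_star, Quaternion.re_smul,
      Quaternion.imI_smul, Quaternion.imJ_smul, Quaternion.imK_smul, Quaternion.re_add,
      Quaternion.imI_add, Quaternion.imJ_add, Quaternion.imK_add, Quaternion.re_one,
      Quaternion.imI_one, Quaternion.imJ_one, Quaternion.imK_one, smul_eq_mul] <;>
    simp only [qi, qj, qk, ekt] <;>
    norm_num <;>
    constructorm* _ ∧ _ <;>
    first
      | linear_combination a * h
      | linear_combination b * h
      | linear_combination c * h
      | linear_combination d * h
      | linear_combination e * h
      | linear_combination f * h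

/- STATEMENT 15: For the action of Sp(1)³ on ℍ³ given by
   (p,q,s)·(x,y,z) = (p x q̄, p y s̄, q z s̄):
   (1) the isotropy subgroup at (1, i, j) is exactly H = {(e^{kt}, e^{kt}, e^{−kt}) : t ∈ ℝ};
   (2) the fixed point subspace of H in ℍ³ is span⟨1,k⟩ ⊕ span⟨i,j⟩ ⊕ span⟨i,j⟩. -/
theorem stmt15 :
    ({g : ℍ[ℝ] × ℍ[ℝ] × ℍ[ℝ] | ‖g.1‖ = 1 ∧ ‖g.2.1‖ = 1 ∧ ‖g.2.2‖ = 1 ∧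
        g.1 * 1 * star g.2.1 = 1 ∧ g.1 * qi * star g.2.2 = qi ∧
        g.2.1 * qj * star g.2.2 = qj} =
      {g | ∃ t : ℝ, g = (ekt t, ekt t, star (ekt t))}) ∧
    ({v : ℍ[ℝ] × ℍ[ℝ] × ℍ[ℝ] | ∀ t : ℝ,
        ekt t * v.1 * star (ekt t) = v.1 ∧
        ekt t * v.2.1 * star (star (ekt t)) = v.2.1 ∧
        ekt t * v.2.2 * star (star (ekt t)) = v.2.2} =
      {v | v.1 ∈ Submodule.span ℝ ({1, qk} : Set ℍ[ℝ]) ∧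
        v.2.1 ∈ Submodule.span ℝ ({qi, qj} : Set ℍ[ℝ]) ∧
        v.2.2 ∈ Submodule.span ℝ ({qi, qj} : Set ℍ[ℝ])}) := by
  constructor
  · ext g
    obtain ⟨p, q, s⟩ := g
    simp only [Set.mem_setOf_eq]
    constructor
    · rintro ⟨hp, hq, hs, h1, h2, h3⟩
      exact part1fwd' p q s hp hq hs h1 h2 h3
    · rintro ⟨t, hpt⟩
      rw [Prod.mk.injEq, Prod.mk.injEq] at hpt
      obtain ⟨rfl, rfl, rfl⟩ := hpt
      obtain ⟨b1, b2, b3⟩ := part1bwd' t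
      exact ⟨ekt_norm' t, ekt_norm' t, by rw [norm_star]; exact ekt_norm' t, b1, b2, b3⟩
  · ext v
    obtain ⟨x, y, z⟩ := v
    simp only [Set.mem_setOf_eq]
    constructor
    · intro h
      exact part2fwd' x y z h
    · rintro ⟨hx, hy, hz⟩ t
      exact part2bwd' x y z hx hy hz t
end
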